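/- arXiv:2211.12392 — 3 statements merged into one kernel-verified Lean document; each statement's English description precedes it below -/
import Mathlib

section
/- The interval domain $I\overline{\mathbb{R}}_+$ of closed intervals $[a,b]$ with $0 \le a \le b \le +\infty$, ordered by reverse inclusion, with addition $[a,b]+[c,d]=[a+c,b+d]$ and multiplication $[a,b]\times[c,d]=[a\cdot_\ell c, b\cdot_r d]$, is an Abelian d-rag: $(R,0,+)$ with $0=[0,0]$ is an Abelian monoid, $(R,1,\times)$ with $1=[1,1]$ is an Abelian monoid, $\times$ distributes over $+$, and both operations are Scott-continuous. -/
open scoped ENNReal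

noncomputable section

/-- The "left" product on `ℝ≥0∞`: the ordinary product, with `0 ⬝ ∞ = ∞ ⬝ 0 = 0`
(this is exactly `ENNReal` multiplication). -/
def mulL (a b : ℝ≥0∞) : ℝ≥0∞ := a * b

/-- The "right" product on `ℝ≥0∞`: the ordinary product, except `0 ⬝ ∞ = ∞ ⬝ 0 = ∞`. -/
def mulR (a b : ℝ≥0∞) : ℝ≥0∞ :=
  if (a = 0 ∧ b = ⊤) ∨ (a = ⊤ ∧ b = 0) then ⊤ else a * b

/-- The interval domain `I ℝ≥0∞` of intervals `[a, b]` with `0 ≤ a ≤ b ≤ ∞`. -/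
def IRp : Type := {p : ℝ≥0∞ × ℝ≥0∞ // p.1 ≤ p.2}

namespace IRp

/-- Reverse inclusion ordering: `[a,b] ≤ [c,d]` iff `[c,d] ⊆ [a,b]`, i.e. `a ≤ c` and `d ≤ b`. -/
instance : PartialOrder IRp where
  le x y := x.1.1 ≤ y.1.1 ∧ y.1.2 ≤ x.1.2
  le_refl x := ⟨le_rfl, le_rfl⟩
  le_trans x y z h h' := ⟨h.1.trans h'.1, h'.2.trans h.2⟩
  le_antisymm x y h h' :=
    Subtype.ext (Prod.ext (le_antisymm h.1 h'.1) (le_antisymm h'.2 h.2))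

/-- Addition: `[a,b] + [c,d] = [a+c, b+d]`. -/
def add (x y : IRp) : IRp := ⟨(x.1.1 + y.1.1, x.1.2 + y.1.2), add_le_add x.2 y.2⟩

/-- The additive unit `[0,0]`. -/
def zero : IRp := ⟨(0, 0), le_rfl⟩

/-- The multiplicative unit `[1,1]`. -/
def one : IRp := ⟨(1, 1), le_rfl⟩

/-- Multiplication: `[a,b] × [c,d] = [a ⬝ₗ c, b ⬝ᵣ d]`. -/
def mul (x y : IRp) : IRp :=
  ⟨(mulL x.1.1 y.1.1, mulR x.1.2 y.1.2), by
    unfold mulL mulR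
    split
    · exact le_top
    · exact mul_le_mul' x.2 y.2⟩

end IRp

/-!
Both endpoint operations are commutative, associative and unital, and distribute, so the rag
laws hold componentwise. The only point needing thought is `⬝ᵣ`: it agrees with
`if a = ∞ ∨ b = ∞ then ∞ else a * b`, which makes its laws routine case splits.
A directed set `D` of intervals has supremum `[⨆ a, ⨅ b]` (a genuine interval, since
directedness puts every lower endpoint below every upper one), so Scott-continuity of an
operation reduces to its lower endpoint map commuting with `⨆` and its upper endpoint map with
`⨅`; for `x ⬝ᵣ ·` the latter holds also at `x = 0`, where the map is
`b ↦ if b = ∞ then ∞ else 0`.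
-/

theorem mulR_eq_ite (a b : ℝ≥0∞) : mulR a b = if a = ⊤ ∨ b = ⊤ then ⊤ else a * b := by
  unfold mulR
  rcases eq_or_ne a ⊤ with rfl | ha
  · rcases eq_or_ne b 0 with rfl | hb
    · simp
    · simp [ENNReal.top_mul hb]
  · rcases eq_or_ne b ⊤ with rfl | hb
    · rcases eq_or_ne a 0 with rfl | ha0
      · simp
      · simp [ha, ha0, ENNReal.mul_top ha0]
    · simp [ha, hb]

theorem mulR_comm (a b : ℝ≥0∞) : mulR a b = mulR b a := by
  simp only [mulR_eq_ite, or_comm, mul_comm]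

theorem mulR_one (a : ℝ≥0∞) : mulR a 1 = a := by
  rcases eq_or_ne a ⊤ with rfl | ha <;> simp [mulR_eq_ite, *]

theorem mulR_assoc (a b c : ℝ≥0∞) : mulR (mulR a b) c = mulR a (mulR b c) := by
  rcases eq_or_ne a ⊤ with rfl | ha
  · simp [mulR_eq_ite]
  rcases eq_or_ne b ⊤ with rfl | hb
  · simp [mulR_eq_ite, ha]
  rcases eq_or_ne c ⊤ with rfl | hc
  · simp [mulR_eq_ite, ha, hb, ENNReal.mul_eq_top]
  · simp [mulR_eq_ite, ha, hb, hc, ENNReal.mul_eq_top, mul_assoc]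

theorem mulR_add (a b c : ℝ≥0∞) : mulR a (b + c) = mulR a b + mulR a c := by
  rcases eq_or_ne a ⊤ with rfl | ha
  · simp [mulR_eq_ite]
  rcases eq_or_ne b ⊤ with rfl | hb
  · simp [mulR_eq_ite, ha]
  rcases eq_or_ne c ⊤ with rfl | hc
  · simp [mulR_eq_ite, ha, hb]
  · simp [mulR_eq_ite, ha, hb, hc, ENNReal.add_eq_top, mul_add]

theorem mulR_iInf {ι : Sort*} (a : ℝ≥0∞) (f : ι → ℝ≥0∞) :
    mulR a (⨅ i, f i) = ⨅ i, mulR a (f i) := by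
  rcases eq_or_ne a ⊤ with rfl | ha
  · simp [mulR_eq_ite]
  rcases eq_or_ne a 0 with rfl | ha0
  · by_cases h : ∀ i, f i = ⊤
    · simp [mulR_eq_ite, h]
    · obtain ⟨i, hi⟩ := not_forall.1 h
      have hinf : ⨅ i, f i ≠ ⊤ := fun htop => hi (iInf_eq_top.1 htop i)
      have hzero : ⨅ i, mulR 0 (f i) = 0 :=
        le_antisymm (iInf_le_of_le i (by simp [mulR_eq_ite, hi])) zero_le
      rw [hzero]
      simp [mulR_eq_ite, hinf]
  · have hmul (b : ℝ≥0∞) : mulR a b = a * b := by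
      rcases eq_or_ne b ⊤ with rfl | hb
      · simp [mulR_eq_ite, ENNReal.mul_top ha0]
      · simp [mulR_eq_ite, ha, hb]
    simp only [hmul]
    exact ENNReal.mul_iInf_of_ne ha0 ha

namespace IRp

theorem ext {x y : IRp} (h₁ : x.1.1 = y.1.1) (h₂ : x.1.2 = y.1.2) : x = y :=
  Subtype.ext (Prod.ext h₁ h₂)

protected theorem add_comm (x y : IRp) : add x y = add y x :=
  ext (add_comm _ _) (add_comm _ _)

protected theorem add_assoc (x y z : IRp) : add (add x y) z = add x (add y z) :=
  ext (add_assoc _ _ _) (add_assoc _ _ _)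

protected theorem add_zero (x : IRp) : add x zero = x :=
  ext (add_zero _) (add_zero _)

protected theorem mul_comm (x y : IRp) : mul x y = mul y x :=
  ext (mul_comm _ _) (mulR_comm _ _)

protected theorem mul_assoc (x y z : IRp) : mul (mul x y) z = mul x (mul y z) :=
  ext (mul_assoc _ _ _) (mulR_assoc _ _ _)

protected theorem mul_one (x : IRp) : mul x one = x :=
  ext (mul_one _) (mulR_one _)

protected theorem mul_add (x y z : IRp) : mul x (add y z) = add (mul x y) (mul x z) :=
  ext (mul_add _ _ _) (mulR_add _ _ _)

theorem isLUB_range {ι : Type*} {u : ι → IRp} {t : IRp} (h₁ : t.1.1 = ⨆ i, (u i).1.1)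
    (h₂ : t.1.2 = ⨅ i, (u i).1.2) : IsLUB (Set.range u) t := by
  constructor
  · rintro _ ⟨i, rfl⟩
    exact ⟨h₁ ▸ le_iSup (fun i => (u i).1.1) i, h₂ ▸ iInf_le (fun i => (u i).1.2) i⟩
  · intro v hv
    exact ⟨h₁ ▸ iSup_le fun i => (hv ⟨i, rfl⟩).1,
      h₂ ▸ le_iInf fun i => (hv ⟨i, rfl⟩).2⟩

def lub (D : Set IRp) (hD : DirectedOn (· ≤ ·) D) : IRp :=
  ⟨(⨆ x : D, (x : IRp).1.1, ⨅ x : D, (x : IRp).1.2), by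
    refine iSup_le fun x => le_iInf fun y => ?_
    obtain ⟨z, -, hxz, hyz⟩ := hD x x.2 y y.2
    exact (hxz.1.trans z.2).trans hyz.2⟩

theorem isLUB_lub {D : Set IRp} (hD : DirectedOn (· ≤ ·) D) : IsLUB D (lub D hD) := by
  simpa using isLUB_range (u := ((↑) : D → IRp)) rfl rfl

theorem scottContinuous_of_endpoints {f : IRp → IRp} {g h : ℝ≥0∞ → ℝ≥0∞}
    (hfg : ∀ x, (f x).1.1 = g x.1.1) (hfh : ∀ x, (f x).1.2 = h x.1.2)
    (hg : ∀ {ι : Type} [Nonempty ι] (u : ι → ℝ≥0∞), g (⨆ i, u i) = ⨆ i, g (u i))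
    (hh : ∀ {ι : Type} [Nonempty ι] (u : ι → ℝ≥0∞), h (⨅ i, u i) = ⨅ i, h (u i)) :
    ScottContinuous f := by
  intro D hne hD s hs
  have : Nonempty D := hne.to_subtype
  obtain rfl : s = lub D hD := hs.unique (isLUB_lub hD)
  have hrange : IsLUB (Set.range (f ∘ ((↑) : D → IRp))) (f (lub D hD)) := by
    refine isLUB_range ?_ ?_
    · simp only [hfg, Function.comp_apply]
      exact hg _
    · simp only [hfh, Function.comp_apply]
      exact hh _
  rwa [Set.range_comp, Subtype.range_coe] at hrange

theorem scottContinuous_add (a : IRp) : ScottContinuous (add a) :=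
  scottContinuous_of_endpoints (fun _ => rfl) (fun _ => rfl) (ENNReal.add_iSup ·)
    (fun _ => ENNReal.add_iInf)

theorem scottContinuous_mul (a : IRp) : ScottContinuous (mul a) :=
  scottContinuous_of_endpoints (fun _ => rfl) (fun _ => rfl) (ENNReal.mul_iSup _ ·)
    (mulR_iInf _ ·)

end IRp

/-- `I ℝ≥0∞` is an Abelian d-rag: `([0,0], +)` is an Abelian monoid, `([1,1], ×)` is an
Abelian monoid, `×` distributes over `+`, every nonempty directed set has a least upper
bound (dcpo), and `+` and `×` are Scott-continuous (in each argument; by commutativity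
this gives Scott-continuity in both). -/
theorem IRp_isAbelianDRag :
    (∀ x y : IRp, IRp.add x y = IRp.add y x) ∧
    (∀ x y z : IRp, IRp.add (IRp.add x y) z = IRp.add x (IRp.add y z)) ∧
    (∀ x : IRp, IRp.add x IRp.zero = x) ∧
    (∀ x y : IRp, IRp.mul x y = IRp.mul y x) ∧
    (∀ x y z : IRp, IRp.mul (IRp.mul x y) z = IRp.mul x (IRp.mul y z)) ∧
    (∀ x : IRp, IRp.mul x IRp.one = x) ∧
    (∀ x y z : IRp, IRp.mul x (IRp.add y z) = IRp.add (IRp.mul x y) (IRp.mul x z)) ∧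
    (∀ D : Set IRp, D.Nonempty → DirectedOn (· ≤ ·) D → ∃ s, IsLUB D s) ∧
    (∀ a : IRp, ScottContinuous (IRp.add a)) ∧
    (∀ a : IRp, ScottContinuous (IRp.mul a)) :=
  ⟨IRp.add_comm, IRp.add_assoc, IRp.add_zero, IRp.mul_comm, IRp.mul_assoc, IRp.mul_one,
    IRp.mul_add, fun D _ hD => ⟨IRp.lub D hD, IRp.isLUB_lub hD⟩, IRp.scottContinuous_add,
    IRp.scottContinuous_mul⟩
end
end

section
/- The operation $\cdot_r$ on $\overline{\mathbb{R}}_+$ with the opposite (reverse) order, defined as ordinary multiplication except that $0\cdot_r(+\infty)=(+\infty)\cdot_r 0 = +\infty$, preserves filtered infima in each argument: for any directed-downward set $D\subseteq \overline{\mathbb{R}}_+$ and any $a\in\overline{\mathbb{R}}_+$, $a\cdot_r \inf D = \inf_{d\in D}(a\cdot_r d)$. -/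
open scoped ENNReal

noncomputable section

/-! Each `mulR a` commutes with arbitrary infima: away from `a ∈ {0, ∞}` it is ordinary
multiplication by a finite nonzero constant, `mulR ∞` is constantly `∞`, and `mulR 0` is the
indicator `b ↦ if b = ∞ then ∞ else 0`, whose infimum over `D` is `∞` exactly when `D ⊆ {∞}`. -/

lemma zero_mulR (b : ℝ≥0∞) : mulR 0 b = if b = ⊤ then ⊤ else 0 := by
  simp [mulR]

lemma top_mulR (b : ℝ≥0∞) : mulR ⊤ b = ⊤ := by
  rcases eq_or_ne b 0 with rfl | hb
  · simp [mulR]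
  · simp [mulR, hb, ENNReal.top_mul hb]

lemma mulR_eq_mul {a : ℝ≥0∞} (ha0 : a ≠ 0) (hatop : a ≠ ⊤) (b : ℝ≥0∞) : mulR a b = a * b := by
  simp [mulR, ha0, hatop]

lemma biInf_ite_eq_top (D : Set ℝ≥0∞) :
    ⨅ d ∈ D, (if d = ⊤ then ⊤ else 0 : ℝ≥0∞) = if sInf D = ⊤ then ⊤ else 0 := by
  split_ifs with hD
  · simpa [sInf_eq_top] using hD
  · obtain ⟨d, hd, hdtop⟩ : ∃ d ∈ D, d ≠ ⊤ := by simpa [sInf_eq_top] using hD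
    exact le_antisymm ((biInf_le _ hd).trans_eq (if_neg hdtop)) zero_le

theorem mulR_preserves_filtered_infima_general (a : ℝ≥0∞) (D : Set ℝ≥0∞) :
    mulR a (sInf D) = ⨅ d ∈ D, mulR a d := by
  rcases eq_or_ne a 0 with rfl | ha0
  · simp only [zero_mulR]
    exact (biInf_ite_eq_top D).symm
  rcases eq_or_ne a ⊤ with rfl | hatop
  · simp [top_mulR]
  · simp only [mulR_eq_mul ha0 hatop]
    rw [sInf_eq_iInf', ENNReal.mul_iInf_of_ne ha0 hatop, iInf_subtype']

/-- `⬝ᵣ` is Scott-continuous in each argument on `ℝ≥0∞` with the *opposite* order: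
it preserves infima of (nonempty) downward-directed subsets of `ℝ≥0∞`. -/
theorem mulR_preserves_filtered_infima (a : ℝ≥0∞) (D : Set ℝ≥0∞)
    (hne : D.Nonempty) (hdir : DirectedOn (· ≥ ·) D) :
    mulR a (sInf D) = ⨅ d ∈ D, mulR a d :=
  mulR_preserves_filtered_infima_general a D
end
end

section
/- Let $K$ be a compact, order-convex subset of a stably compact space $X$. Then $K$ is patch-compact if and only if its downward closure $\downarrow K$ is closed in $X$; and in that case $\downarrow K = \mathrm{cl}(K)$ and $K = \uparrow K \cap \downarrow K$. -/
open Topology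

variable {X : Type*} [TopologicalSpace X]

/-- A subset is saturated if it is the intersection of its open neighborhoods. -/
def IsSaturated (Q : Set X) : Prop :=
  Q = ⋂₀ {U : Set X | IsOpen U ∧ Q ⊆ U}

/-- `X` is coherent: the intersection of two compact saturated subsets is compact. -/
def Coherent (X : Type*) [TopologicalSpace X] : Prop :=
  ∀ Q Q' : Set X, IsCompact Q → IsSaturated Q → IsCompact Q' → IsSaturated Q' →
    IsCompact (Q ∩ Q')

/-- The patch topology: generated by the open sets together with the complements of
compact saturated sets. -/
def patchTop (X : Type*) [TopologicalSpace X] : TopologicalSpace X :=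
  TopologicalSpace.generateFrom
    ({U : Set X | IsOpen U} ∪ {A : Set X | ∃ Q : Set X, IsCompact Q ∧ IsSaturated Q ∧ A = Qᶜ})

/-- The specialization order: `x ≤ y` iff `y ⤳ x`, i.e. `x ∈ closure {y}`. -/
def specLE (x y : X) : Prop := y ⤳ x

/-- Downward closure w.r.t. the specialization order. -/
def dcl (K : Set X) : Set X := {x | ∃ y ∈ K, specLE x y}

/-- Upward closure w.r.t. the specialization order. -/
def ucl (K : Set X) : Set X := {x | ∃ y ∈ K, specLE y x}

/-- `K` is order-convex: `y ≤ x ≤ z` with `y, z ∈ K` implies `x ∈ K`. -/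
def OrderConvex (K : Set X) : Prop :=
  ∀ x y z : X, y ∈ K → z ∈ K → specLE y x → specLE x z → x ∈ K

/-! ### Auxiliary material -/

/-- The saturation of a set: the intersection of its open neighborhoods. -/
def satur (S : Set X) : Set X := ⋂₀ {U : Set X | IsOpen U ∧ S ⊆ U}

lemma subset_satur (S : Set X) : S ⊆ satur S :=
  fun _ hx => Set.mem_sInter.2 fun _ hU => hU.2 hx

lemma satur_subset {S U : Set X} (hU : IsOpen U) (h : S ⊆ U) : satur S ⊆ U :=
  fun _ hx => Set.mem_sInter.1 hx U ⟨hU, h⟩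

lemma satur_isSaturated (S : Set X) : IsSaturated (satur S) := by
  apply Set.Subset.antisymm
  · exact fun _ hx => Set.mem_sInter.2 fun _ hU => hU.2 hx
  · intro x hx
    refine Set.mem_sInter.2 fun U hU => ?_
    exact Set.mem_sInter.1 hx U ⟨hU.1, satur_subset hU.1 hU.2⟩

lemma satur_isCompact {S : Set X} (hS : IsCompact S) : IsCompact (satur S) := by
  refine isCompact_of_finite_subcover fun {ι} U hUo hcov => ?_
  obtain ⟨t, ht⟩ := hS.elim_finite_subcover U hUo ((subset_satur S).trans hcov)
  exact ⟨t, satur_subset (isOpen_biUnion fun i _ => hUo i) ht⟩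

lemma isSaturated_univ : IsSaturated (Set.univ : Set X) := by
  apply Set.Subset.antisymm
  · exact fun _ hx => Set.mem_sInter.2 fun _ hU => hU.2 hx
  · exact fun x _ => Set.mem_univ x

lemma isSaturated_inter {Q Q' : Set X} (h : IsSaturated Q) (h' : IsSaturated Q') :
    IsSaturated (Q ∩ Q') := by
  apply Set.Subset.antisymm
  · exact fun _ hx => Set.mem_sInter.2 fun _ hU => hU.2 hx
  · intro x hx
    constructor
    · rw [h]
      refine Set.mem_sInter.2 fun U hU => ?_
      exact Set.mem_sInter.1 hx U ⟨hU.1, Set.inter_subset_left.trans hU.2⟩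
    · rw [h']
      refine Set.mem_sInter.2 fun U hU => ?_
      exact Set.mem_sInter.1 hx U ⟨hU.1, Set.inter_subset_right.trans hU.2⟩

lemma isSaturated_upwardClosed {Q : Set X} (h : IsSaturated Q) {z x : X}
    (hz : z ∈ Q) (hzx : specLE z x) : x ∈ Q := by
  rw [h]
  refine Set.mem_sInter.2 fun U hU => ?_
  exact Specializes.mem_open hzx hU.1 (hU.2 (h ▸ hz))

lemma patch_isOpen_of_isOpen {U : Set X} (hU : IsOpen U) : IsOpen[patchTop X] U :=
  TopologicalSpace.isOpen_generateFrom_of_mem (Or.inl hU)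

lemma patch_isClosed_of_isClosed {C : Set X} (hC : IsClosed C) : IsClosed[patchTop X] C :=
  @IsClosed.mk X (patchTop X) C (patch_isOpen_of_isOpen hC.isOpen_compl)

lemma patch_isClosed_of_compact_saturated {Q : Set X} (hc : IsCompact Q) (hs : IsSaturated Q) :
    IsClosed[patchTop X] Q :=
  @IsClosed.mk X (patchTop X) Q
    (TopologicalSpace.isOpen_generateFrom_of_mem (Or.inr ⟨Q, hc, hs, rfl⟩))

omit [TopologicalSpace X] in
lemma chain_finset_lb {c : Set (Set X)} (hchain : IsChain (· ⊆ ·) c) (hcne : c.Nonempty)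
    (u : Finset (Set X)) : ↑u ⊆ c → ∃ m ∈ c, ∀ s ∈ u, m ⊆ s := by
  classical
  induction u using Finset.induction_on with
  | empty => exact fun _ => ⟨hcne.choose, hcne.choose_spec, by simp⟩
  | @insert a v ha ih =>
    intro hu
    have hvc : ↑v ⊆ c := fun s hs => hu (Finset.mem_coe.2 (Finset.mem_insert_of_mem hs))
    obtain ⟨m, hmc, hm⟩ := ih hvc
    have hac : a ∈ c := hu (Finset.mem_coe.2 (Finset.mem_insert_self a v))
    rcases eq_or_ne m a with rfl | hne
    · exact ⟨m, hmc, fun s hs => (Finset.mem_insert.1 hs).elim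
        (fun h => by subst h; exact subset_rfl) (hm s)⟩
    rcases hchain hmc hac hne with h1 | h1
    · exact ⟨m, hmc, fun s hs => (Finset.mem_insert.1 hs).elim
        (fun h => by subst h; exact h1) (hm s)⟩
    · exact ⟨a, hac, fun s hs => (Finset.mem_insert.1 hs).elim
        (fun h => by subst h; exact subset_rfl) (fun h => h1.trans (hm s h))⟩

/-- Hofmann–Mislove / well-filteredness: in a quasi-sober space, if a directed family of
compact, upward-closed sets has intersection inside an open set `U`, then some member is
already inside `U`. -/
lemma hofmannMislove [QuasiSober X] {ι : Type*} [Nonempty ι] (Q : ι → Set X)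
    (hc : ∀ i, IsCompact (Q i))
    (hup : ∀ i, ∀ ⦃z x : X⦄, z ∈ Q i → specLE z x → x ∈ Q i)
    (hdir : ∀ i j, ∃ k, Q k ⊆ Q i ∩ Q j)
    {U : Set X} (hU : IsOpen U) (hsub : (⋂ i, Q i) ⊆ U) : ∃ i, Q i ⊆ U := by
  classical
  by_contra hcon
  push_neg at hcon
  simp only [Set.not_subset] at hcon
  set S : Set (Set X) := {C | IsClosed C ∧ C ⊆ Uᶜ ∧ ∀ i, (C ∩ Q i).Nonempty} with hSdef
  have hUc : Uᶜ ∈ S := by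
    refine ⟨hU.isClosed_compl, subset_rfl, fun i => ?_⟩
    obtain ⟨x, hxQ, hxU⟩ := hcon i
    exact ⟨x, hxU, hxQ⟩
  have hzorn : ∀ c ⊆ S, IsChain (· ⊆ ·) c → c.Nonempty →
      ∃ lb ∈ S, ∀ s ∈ c, lb ⊆ s := by
    intro c hcS hchain hcne
    refine ⟨⋂₀ c, ⟨isClosed_sInter fun s hs => (hcS hs).1, ?_, fun i => ?_⟩,
      fun s hs => Set.sInter_subset_of_mem hs⟩
    · obtain ⟨s, hs⟩ := hcne
      exact (Set.sInter_subset_of_mem hs).trans (hcS hs).2.1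
    · have key := (hc i).inter_iInter_nonempty (fun s : c => (s : Set X))
        (fun s => (hcS s.2).1) ?_
      · obtain ⟨x, hx1, hx2⟩ := key
        refine ⟨x, ?_, hx1⟩
        refine Set.mem_sInter.2 fun s hs => ?_
        exact Set.mem_iInter.1 hx2 ⟨s, hs⟩
      · intro u
        obtain ⟨m, hmc, hm⟩ := chain_finset_lb hchain hcne (u.image (fun s : c => (s : Set X)))
          (by intro s hs
              obtain ⟨t, _, rfl⟩ := Finset.mem_image.1 (Finset.mem_coe.1 hs)
              exact t.2)
        obtain ⟨x, hx1, hx2⟩ := (hcS hmc).2.2 i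
        refine ⟨x, hx2, ?_⟩
        refine Set.mem_iInter₂.2 fun s hs => ?_
        exact hm _ (Finset.mem_image.2 ⟨s, hs, rfl⟩) hx1
  obtain ⟨C, -, hCmin⟩ := zorn_superset_nonempty S hzorn _ hUc
  have hCcl : IsClosed C := hCmin.prop.1
  have hCU : C ⊆ Uᶜ := hCmin.prop.2.1
  have hCQ : ∀ i, (C ∩ Q i).Nonempty := hCmin.prop.2.2
  have key : ∀ w : Set X, IsOpen w → (C ∩ w).Nonempty → ∃ i, C ∩ Q i ⊆ w := by
    intro w hw hne
    obtain ⟨p, hpC, hpw⟩ := hne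
    by_contra hk
    push_neg at hk
    simp only [Set.not_subset] at hk
    have hmem : C ∩ wᶜ ∈ S := by
      refine ⟨hCcl.inter hw.isClosed_compl, Set.inter_subset_left.trans hCU, fun i => ?_⟩
      obtain ⟨x, hx, hxw⟩ := hk i
      exact ⟨x, ⟨hx.1, hxw⟩, hx.2⟩
    have := hCmin.2 hmem Set.inter_subset_left
    exact (this hpC).2 hpw
  have hirr : IsIrreducible C := by
    constructor
    · obtain ⟨x, hx, -⟩ := hCQ (Classical.arbitrary ι)
      exact ⟨x, hx⟩
    · rintro u v hu hv ⟨xu, hxuC, hxuu⟩ ⟨xv, hxvC, hxvv⟩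
      obtain ⟨i, hi⟩ := key u hu ⟨xu, hxuC, hxuu⟩
      obtain ⟨j, hj⟩ := key v hv ⟨xv, hxvC, hxvv⟩
      obtain ⟨k, hk⟩ := hdir i j
      obtain ⟨x, hxC, hxQ⟩ := hCQ k
      exact ⟨x, hxC, hi ⟨hxC, (hk hxQ).1⟩, hj ⟨hxC, (hk hxQ).2⟩⟩
  obtain ⟨x, hx⟩ := QuasiSober.sober hirr hCcl
  have hx' : closure ({x} : Set X) = C := hx
  have hxC : x ∈ C := by rw [← hx']; exact subset_closure (Set.mem_singleton x)
  have hxQ : ∀ i, x ∈ Q i := by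
    intro i
    obtain ⟨z, hzC, hzQ⟩ := hCQ i
    have hzx : specLE z x := by
      have hzcl : z ∈ closure ({x} : Set X) := by rw [hx']; exact hzC
      exact specializes_iff_mem_closure.2 hzcl
    exact hup i hzQ hzx
  exact hCU hxC (hsub (Set.mem_iInter.2 hxQ))

/-- A stably compact space is compact in the patch topology. -/
lemma patch_compact [CompactSpace X] [QuasiSober X] (hcoh : Coherent X) :
    @IsCompact X (patchTop X) Set.univ := by
  rw [@isCompact_iff_ultrafilter_le_nhds X (patchTop X)]
  intro f _
  haveI : Nonempty {Q : Set X // IsCompact Q ∧ IsSaturated Q ∧ Q ∈ f} :=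
    ⟨⟨Set.univ, isCompact_univ, isSaturated_univ, Filter.univ_mem⟩⟩
  set ι := {Q : Set X // IsCompact Q ∧ IsSaturated Q ∧ Q ∈ f} with hι
  have hup : ∀ i : ι, ∀ ⦃z x : X⦄, z ∈ i.1 → specLE z x → x ∈ i.1 :=
    fun i _ _ hz h => isSaturated_upwardClosed i.2.2.1 hz h
  have hdir : ∀ i j : ι, ∃ k : ι, k.1 ⊆ i.1 ∩ j.1 := fun i j =>
    ⟨⟨i.1 ∩ j.1, hcoh _ _ i.2.1 i.2.2.1 j.2.1 j.2.2.1, isSaturated_inter i.2.2.1 j.2.2.1,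
      Filter.inter_mem i.2.2.2 j.2.2.2⟩, subset_rfl⟩
  have hx : ∃ x, (∀ i : ι, x ∈ i.1) ∧ ∀ U : Set X, IsOpen U → x ∈ U → U ∈ f := by
    by_contra hcon
    push_neg at hcon
    have hsub : (⋂ i : ι, i.1) ⊆ ⋃₀ {U : Set X | IsOpen U ∧ U ∉ f} := by
      intro x hxA
      obtain ⟨U, hUo, hxU, hUf⟩ := hcon x (fun i => Set.mem_iInter.1 hxA i)
      exact ⟨U, ⟨hUo, hUf⟩, hxU⟩
    obtain ⟨i, hi⟩ := hofmannMislove (fun i : ι => i.1) (fun i => i.2.1) hup hdir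
      (isOpen_sUnion fun U hU => hU.1) hsub
    obtain ⟨t, ht⟩ := i.2.1.elim_finite_subcover
      (fun U : {U : Set X // IsOpen U ∧ U ∉ f} => U.1) (fun U => U.2.1)
      (by intro x hxQ
          obtain ⟨U, ⟨hUo, hUf⟩, hxU⟩ := hi hxQ
          exact Set.mem_iUnion.2 ⟨⟨U, hUo, hUf⟩, hxU⟩)
    have hmem : (⋃ U ∈ t, (U : {U : Set X // IsOpen U ∧ U ∉ f}).1) ∈ f :=
      Filter.mem_of_superset i.2.2.2 ht
    rw [← Finset.set_biUnion_coe, Ultrafilter.finite_biUnion_mem_iff t.finite_toSet] at hmem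
    obtain ⟨U, -, hUf⟩ := hmem
    exact U.2.2 hUf
  obtain ⟨x, hxA, hxf⟩ := hx
  refine ⟨x, Set.mem_univ x, ?_⟩
  show ↑f ≤ @nhds X (TopologicalSpace.generateFrom _) x
  rw [TopologicalSpace.nhds_generateFrom]
  refine le_iInf₂ fun s hs => ?_
  obtain ⟨hxs, hsg⟩ := hs
  rw [Filter.le_principal_iff]
  rcases hsg with hopen | ⟨Q, hQc, hQs, rfl⟩
  · exact hxf s hopen hxs
  · refine (Ultrafilter.compl_mem_iff_notMem).2 fun hQf => ?_
    exact hxs (hxA ⟨Q, hQc, hQs, hQf⟩)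

lemma subset_dcl (K : Set X) : K ⊆ dcl K := fun y hy => ⟨y, hy, specializes_refl y⟩

lemma dcl_subset_closure (K : Set X) : dcl K ⊆ closure K := by
  rintro x ⟨y, hy, hxy⟩
  exact closure_mono (Set.singleton_subset_iff.2 hy) (specializes_iff_mem_closure.1 hxy)

lemma ucl_subset_satur (K : Set X) : ucl K ⊆ satur K := by
  rintro x ⟨y, hy, hyx⟩
  exact Set.mem_sInter.2 fun U hU => Specializes.mem_open hyx hU.1 (hU.2 hy)

lemma satur_subset_ucl {K : Set X} (hK : IsCompact K) : satur K ⊆ ucl K := by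
  intro x hx
  by_contra hxu
  have hcov : ∀ y ∈ K, ∃ U : Set X, IsOpen U ∧ y ∈ U ∧ x ∉ U := by
    intro y hy
    by_contra hc
    push_neg at hc
    exact hxu ⟨y, hy, specializes_iff_forall_open.2 fun U hU hyU => hc U hU hyU⟩
  obtain ⟨t, ht⟩ := hK.elim_finite_subcover
    (fun U : {U : Set X // IsOpen U ∧ x ∉ U} => U.1) (fun U => U.2.1)
    (by intro y hy
        obtain ⟨U, hUo, hyU, hxU⟩ := hcov y hy
        exact Set.mem_iUnion.2 ⟨⟨U, hUo, hxU⟩, hyU⟩)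
  have hxW : x ∈ ⋃ U ∈ t, (U : {U : Set X // IsOpen U ∧ x ∉ U}).1 :=
    Set.mem_sInter.1 hx _ ⟨isOpen_biUnion fun U _ => U.2.1, ht⟩
  obtain ⟨U, -, hxU⟩ := Set.mem_iUnion₂.1 hxW
  exact U.2.2 hxU

/-- Forward direction: patch-compactness forces the closure to be the downward closure. -/
lemma closure_subset_dcl [LocallyCompactSpace X] [CompactSpace X] {K : Set X}
    (hpc : @IsCompact X (patchTop X) K) : closure K ⊆ dcl K := by
  intro x hx
  haveI : Nonempty {Q : Set X // IsCompact Q ∧ IsSaturated Q ∧ x ∈ interior Q} :=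
    ⟨⟨Set.univ, isCompact_univ, isSaturated_univ, by simp⟩⟩
  have key : (K ∩ ⋂ i : {Q : Set X // IsCompact Q ∧ IsSaturated Q ∧ x ∈ interior Q},
      i.1).Nonempty := by
    refine @IsCompact.inter_iInter_nonempty X (patchTop X) K _ hpc _
      (fun i => patch_isClosed_of_compact_saturated i.2.1 i.2.2.1) ?_
    intro u
    have hW : IsOpen (⋂ i ∈ u, interior (i : {Q : Set X // IsCompact Q ∧ IsSaturated Q ∧
        x ∈ interior Q}).1) := isOpen_biInter_finset fun i _ => isOpen_interior
    have hxW : x ∈ ⋂ i ∈ u, interior (i : {Q : Set X // IsCompact Q ∧ IsSaturated Q ∧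
        x ∈ interior Q}).1 := Set.mem_iInter₂.2 fun i _ => i.2.2.2
    obtain ⟨y, hyW, hyK⟩ := mem_closure_iff.1 hx _ hW hxW
    exact ⟨y, hyK, Set.mem_iInter₂.2 fun i hi =>
      interior_subset (Set.mem_iInter₂.1 hyW i hi)⟩
  obtain ⟨y, hyK, hyQ⟩ := key
  refine ⟨y, hyK, specializes_iff_forall_open.2 fun U hU hxU => ?_⟩
  obtain ⟨Q0, hQ0c, hxint, hQ0U⟩ := exists_compact_subset hU hxU
  have hy : y ∈ satur Q0 := Set.mem_iInter.1 hyQ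
    ⟨satur Q0, satur_isCompact hQ0c, satur_isSaturated Q0,
      interior_mono (subset_satur Q0) hxint⟩
  exact satur_subset hU hQ0U hy

/-- For a compact, order-convex subset `K` of a stably compact space (sober, locally compact,
compact, coherent), `K` is patch-compact iff `↓K` is closed; and in that case
`↓K = cl(K)` and `K = ↑K ∩ ↓K`. -/
theorem patchCompact_iff_dcl_closed
    [CompactSpace X] [QuasiSober X] [T0Space X] [LocallyCompactSpace X]
    (hcoh : Coherent X)
    (K : Set X) (hK : IsCompact K) (hconv : OrderConvex K) :
    ((@IsCompact X (patchTop X) K) ↔ IsClosed (dcl K)) ∧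
    (IsClosed (dcl K) → dcl K = closure K ∧ K = ucl K ∩ dcl K) := by
  have hKeq : K = ucl K ∩ dcl K := by
    apply Set.Subset.antisymm
    · exact fun y hy => ⟨⟨y, hy, specializes_refl y⟩, ⟨y, hy, specializes_refl y⟩⟩
    · rintro x ⟨⟨y, hy, hyx⟩, ⟨z, hz, hxz⟩⟩
      exact hconv x y z hy hz hyx hxz
  have hdcl_of_closed : ∀ _ : IsClosed (dcl K), dcl K = closure K := fun hcl =>
    Set.Subset.antisymm (dcl_subset_closure K) (closure_minimal (subset_dcl K) hcl)
  refine ⟨⟨fun hpc => ?_, fun hcl => ?_⟩, fun hcl => ⟨hdcl_of_closed hcl, hKeq⟩⟩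
  · have : dcl K = closure K :=
      Set.Subset.antisymm (dcl_subset_closure K) (closure_subset_dcl hpc)
    rw [this]
    exact isClosed_closure
  · have huclK : ucl K = satur K :=
      Set.Subset.antisymm (ucl_subset_satur K) (satur_subset_ucl hK)
    have hucl_closed : IsClosed[patchTop X] (ucl K) := by
      rw [huclK]
      exact patch_isClosed_of_compact_saturated (satur_isCompact hK) (satur_isSaturated K)
    have hdcl_closed : IsClosed[patchTop X] (dcl K) := patch_isClosed_of_isClosed hcl
    have hXc := patch_compact hcoh
    rw [hKeq]
    exact @IsCompact.of_isClosed_subset X (patchTop X) _ _ hXc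
      (@IsClosed.inter X _ _ (patchTop X) hucl_closed hdcl_closed) (Set.subset_univ _)
end
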